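/- arXiv:2209.02411 — 4 statements merged into one kernel-verified Lean document; each statement's English description precedes it below -/
import Mathlib

section
/- For every fixed τ ∈ ℝ, the function Q is infinitely differentiable on ℝ and satisfies the third-order linear differential equation Q'''(s) − τ·Q'(s) = s·Q(s) for all s ∈ ℝ. -/
open MeasureTheory Real Filter Metric Set

noncomputable section

namespace PearceyAux

/-- integrand -/
def g (τ s t : ℝ) : ℂ :=
  Complex.exp (-(t : ℂ) ^ 4 / 4 - (τ : ℂ) * (t : ℂ) ^ 2 / 2 + Complex.I * (s : ℂ) * (t : ℂ))

lemma g_eq (τ s t : ℝ) : g τ s t =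
    Complex.exp (((-t ^ 4 / 4 - τ * t ^ 2 / 2 : ℝ) : ℂ) + ((s * t : ℝ) : ℂ) * Complex.I) := by
  unfold g; congr 1; push_cast; ring

lemma norm_g (τ s t : ℝ) : ‖g τ s t‖ = Real.exp (-t ^ 4 / 4 - τ * t ^ 2 / 2) := by
  rw [g_eq, Complex.norm_exp]
  congr 1
  simp [← Complex.ofReal_pow]

lemma exp_bound (τ t : ℝ) :
    Real.exp (-t ^ 4 / 4 - τ * t ^ 2 / 2) ≤ Real.exp ((1 - τ / 2) ^ 2) * Real.exp (-t ^ 2) := by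
  rw [← Real.exp_add]
  apply Real.exp_le_exp.2
  nlinarith [sq_nonneg (t ^ 2 / 2 - (1 - τ / 2))]

lemma continuous_g (τ s : ℝ) : Continuous (fun t : ℝ => g τ s t) := by
  unfold g; fun_prop

lemma integrable_abs_pow_gauss (n : ℕ) :
    Integrable (fun t : ℝ => |t| ^ n * Real.exp (-t ^ 2)) := by
  have h := (integrable_rpow_mul_exp_neg_mul_sq (b := 1) one_pos
      (s := (n : ℝ)) ((by norm_num : (-1:ℝ) < 0).trans_le (Nat.cast_nonneg n))).abs
  apply h.congr
  filter_upwards with t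
  rw [Real.rpow_natCast]
  rw [abs_mul, abs_pow, abs_of_nonneg (Real.exp_pos _).le, neg_one_mul]

lemma integrable_aux (τ : ℝ) (n : ℕ) (s : ℝ) :
    Integrable (fun t : ℝ => (t : ℂ) ^ n * g τ s t) := by
  apply Integrable.mono' ((integrable_abs_pow_gauss n).const_mul (Real.exp ((1 - τ / 2) ^ 2)))
  · exact ((Complex.continuous_ofReal.pow n).mul (continuous_g τ s)).aestronglyMeasurable
  · filter_upwards with t
    rw [norm_mul, norm_pow, Complex.norm_real, Real.norm_eq_abs, norm_g]
    calc |t| ^ n * Real.exp (-t ^ 4 / 4 - τ * t ^ 2 / 2)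
        ≤ |t| ^ n * (Real.exp ((1 - τ / 2) ^ 2) * Real.exp (-t ^ 2)) := by
          exact mul_le_mul_of_nonneg_left (exp_bound τ t) (by positivity)
      _ = Real.exp ((1 - τ / 2) ^ 2) * (|t| ^ n * Real.exp (-t ^ 2)) := by ring

lemma hasDerivAt_g_t (τ s t : ℝ) :
    HasDerivAt (fun t : ℝ => g τ s t)
      ((-(t : ℂ) ^ 3 - τ * t + Complex.I * s) * g τ s t) t := by
  have hpoly : ∀ z : ℂ, HasDerivAt (fun z : ℂ => -z ^ 4 / 4 - (τ : ℂ) * z ^ 2 / 2 + Complex.I * s * z)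
      (-z ^ 3 - τ * z + Complex.I * s) z := by
    intro z
    have h1 := hasDerivAt_pow 4 z
    have h2 := hasDerivAt_pow 2 z
    have h3 := hasDerivAt_id z
    have := ((h1.neg.div_const 4).sub ((h2.const_mul ((τ : ℂ))).div_const 2)).add
      (h3.const_mul (Complex.I * s))
    refine this.congr_deriv ?_
    push_cast; ring
  have := ((hpoly (t : ℂ)).cexp).comp_ofReal
  simpa [g, mul_comm] using this

lemma hasDerivAt_g_s (τ t s : ℝ) :
    HasDerivAt (fun s : ℝ => g τ s t) (Complex.I * t * g τ s t) s := by
  have hpoly : ∀ z : ℂ, HasDerivAt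
      (fun z : ℂ => -(t : ℂ) ^ 4 / 4 - (τ : ℂ) * (t : ℂ) ^ 2 / 2 + Complex.I * z * t)
      (Complex.I * t) z := by
    intro z
    have h3 := hasDerivAt_id z
    have := ((hasDerivAt_const z (-(t : ℂ) ^ 4 / 4 - (τ : ℂ) * (t : ℂ) ^ 2 / 2))).add
      ((h3.const_mul (Complex.I)).mul_const ((t : ℂ)))
    refine this.congr_deriv ?_
    simp
  have := ((hpoly (s : ℂ)).cexp).comp_ofReal
  simpa [g, mul_comm] using this

lemma tendsto_g_atTop (τ s : ℝ) : Tendsto (fun t : ℝ => g τ s t) atTop (nhds 0) := by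
  rw [tendsto_zero_iff_norm_tendsto_zero]
  have hb : Tendsto (fun t : ℝ => Real.exp ((1 - τ / 2) ^ 2) * Real.exp (-t ^ 2)) atTop (nhds 0) := by
    rw [show (0 : ℝ) = Real.exp ((1 - τ / 2) ^ 2) * 0 by ring]
    apply Tendsto.const_mul
    apply Real.tendsto_exp_atBot.comp
    exact tendsto_neg_atTop_atBot.comp (tendsto_pow_atTop (two_ne_zero))
  apply squeeze_zero (fun t => norm_nonneg _) (fun t => ?_) hb
  rw [norm_g]; exact exp_bound τ t

lemma tendsto_g_atBot (τ s : ℝ) : Tendsto (fun t : ℝ => g τ s t) atBot (nhds 0) := by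
  rw [tendsto_zero_iff_norm_tendsto_zero]
  have hsq : Tendsto (fun t : ℝ => t ^ 2) atBot atTop := by
    have h1 : Tendsto (fun x : ℝ => x ^ 2) atTop atTop := tendsto_pow_atTop (by norm_num)
    have h2 : Tendsto (fun x : ℝ => |x|) atBot atTop := tendsto_abs_atBot_atTop
    have := h1.comp h2
    apply this.congr
    intro t
    exact (sq_abs t)
  have hb : Tendsto (fun t : ℝ => Real.exp ((1 - τ / 2) ^ 2) * Real.exp (-t ^ 2)) atBot (nhds 0) := by
    rw [show (0 : ℝ) = Real.exp ((1 - τ / 2) ^ 2) * 0 by ring]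
    apply Tendsto.const_mul
    exact Real.tendsto_exp_atBot.comp (tendsto_neg_atTop_atBot.comp hsq)
  apply squeeze_zero (fun t => norm_nonneg _) (fun t => ?_) hb
  rw [norm_g]; exact exp_bound τ t

lemma integrable_deriv_t (τ s : ℝ) :
    Integrable (fun t : ℝ => (-(t : ℂ) ^ 3 - τ * t + Complex.I * s) * g τ s t) := by
  have h := (((integrable_aux τ 3 s).neg).sub ((integrable_aux τ 1 s).const_mul ((τ : ℂ)))).add
    ((integrable_aux τ 0 s).const_mul (Complex.I * s))
  apply h.congr
  filter_upwards with t
  simp only [Pi.add_apply, Pi.sub_apply, Pi.neg_apply]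
  ring

lemma key_IBP (τ s : ℝ) :
    ∫ t : ℝ, (-(t : ℂ) ^ 3 - τ * t + Complex.I * s) * g τ s t = 0 := by
  have hint := integrable_deriv_t τ s
  rw [← intervalIntegral.integral_Iic_add_Ioi (b := 0) hint.integrableOn hint.integrableOn]
  have h1 : ∫ t in Iic (0 : ℝ), (-(t : ℂ) ^ 3 - τ * t + Complex.I * s) * g τ s t
      = g τ s 0 - 0 :=
    integral_Iic_of_hasDerivAt_of_tendsto' (fun x _ => hasDerivAt_g_t τ s x)
      hint.integrableOn (tendsto_g_atBot τ s)
  have h2 : ∫ t in Ioi (0 : ℝ), (-(t : ℂ) ^ 3 - τ * t + Complex.I * s) * g τ s t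
      = 0 - g τ s 0 :=
    integral_Ioi_of_hasDerivAt_of_tendsto' (fun x _ => hasDerivAt_g_t τ s x)
      hint.integrableOn (tendsto_g_atTop τ s)
  rw [h1, h2]; ring

/-- moments -/
def W (τ : ℝ) (n : ℕ) (s : ℝ) : ℂ := ∫ t : ℝ, (t : ℂ) ^ n * g τ s t

lemma hasDerivAt_W (τ : ℝ) (n : ℕ) (s : ℝ) :
    HasDerivAt (W τ n) (Complex.I * W τ (n + 1) s) s := by
  have key := hasDerivAt_integral_of_dominated_loc_of_deriv_le (μ := volume)
    (F := fun (x : ℝ) (t : ℝ) => (t : ℂ) ^ n * g τ x t)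
    (F' := fun (x : ℝ) (t : ℝ) => Complex.I * ((t : ℂ) ^ (n + 1) * g τ x t))
    (x₀ := s)
    (bound := fun t : ℝ => |t| ^ (n + 1) * Real.exp (-t ^ 4 / 4 - τ * t ^ 2 / 2))
    (ball_mem_nhds _ one_pos)
    (Eventually.of_forall fun x =>
      (((Complex.continuous_ofReal.pow n).mul (continuous_g τ x)).aestronglyMeasurable))
    (integrable_aux τ n s)
    ((continuous_const.mul ((Complex.continuous_ofReal.pow (n + 1)).mul
      (continuous_g τ s))).aestronglyMeasurable)
    (Eventually.of_forall fun t => fun x _ => by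
      rw [norm_mul, Complex.norm_I, one_mul, norm_mul, norm_pow, Complex.norm_real,
        Real.norm_eq_abs, norm_g])
    (by
      apply ((integrable_aux τ (n + 1) s).norm).congr
      filter_upwards with t
      rw [norm_mul, norm_pow, Complex.norm_real, Real.norm_eq_abs, norm_g])
    (Eventually.of_forall fun t => fun x _ => by
      have := (hasDerivAt_g_s τ t x).const_mul ((t : ℂ) ^ n)
      refine this.congr_deriv ?_
      push_cast; ring)
  have h2 := key.2
  rw [MeasureTheory.integral_const_mul] at h2
  exact h2

lemma W_relation (τ s : ℝ) :
    W τ 3 s + (τ : ℂ) * W τ 1 s = Complex.I * s * W τ 0 s := by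
  have h := key_IBP τ s
  have hexp : ∫ t : ℝ, (-(t : ℂ) ^ 3 - τ * t + Complex.I * s) * g τ s t
      = -W τ 3 s - (τ : ℂ) * W τ 1 s + Complex.I * s * W τ 0 s := by
    unfold W
    rw [← MeasureTheory.integral_const_mul, ← MeasureTheory.integral_const_mul, ← integral_neg,
      ← integral_sub, ← integral_add]
    · congr 1; funext t; ring
    · exact ((integrable_aux τ 3 s).neg).sub ((integrable_aux τ 1 s).const_mul _)
    · exact (integrable_aux τ 0 s).const_mul _
    · exact (integrable_aux τ 3 s).neg
    · exact (integrable_aux τ 1 s).const_mul _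
  rw [hexp] at h
  linear_combination -h

lemma iteratedDeriv_eq (τ : ℝ) (c : ℂ) (k : ℕ) :
    iteratedDeriv k (fun s : ℝ => c * W τ 0 s) = fun s => c * Complex.I ^ k * W τ k s := by
  induction k with
  | zero => simp
  | succ k ih =>
    rw [iteratedDeriv_succ, ih]
    funext s
    have h := (hasDerivAt_W τ k s).const_mul (c * Complex.I ^ k)
    have h2 : HasDerivAt (fun s => c * Complex.I ^ k * W τ k s)
        (c * Complex.I ^ (k + 1) * W τ (k + 1) s) s := by
      refine h.congr_deriv ?_; ring
    exact h2.deriv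

/-! ### Complex-parameter version, for analyticity -/

def gc (τ : ℝ) (z : ℂ) (t : ℝ) : ℂ :=
  Complex.exp (-(t : ℂ) ^ 4 / 4 - (τ : ℂ) * (t : ℂ) ^ 2 / 2 + Complex.I * z * (t : ℂ))

lemma gc_eq (τ : ℝ) (z : ℂ) (t : ℝ) : gc τ z t =
    Complex.exp (((-t ^ 4 / 4 - τ * t ^ 2 / 2 : ℝ) : ℂ) + Complex.I * z * (t : ℂ)) := by
  unfold gc; congr 1; push_cast; ring

lemma norm_gc (τ : ℝ) (z : ℂ) (t : ℝ) :
    ‖gc τ z t‖ = Real.exp (-t ^ 4 / 4 - τ * t ^ 2 / 2 - z.im * t) := by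
  rw [gc_eq, Complex.norm_exp]
  congr 1
  simp [Complex.add_re, Complex.mul_re, Complex.mul_im, ← Complex.ofReal_pow]
  ring

lemma exp_bound' (τ a t : ℝ) :
    -t ^ 4 / 4 - τ * t ^ 2 / 2 + a * |t| ≤ ((3 / 2 + |τ| / 2) ^ 2 + a ^ 2 / 2) + -t ^ 2 := by
  nlinarith [sq_nonneg (t ^ 2 / 2 - (3 / 2 + |τ| / 2)), sq_nonneg (|t| - a), neg_abs_le τ,
    sq_abs t, sq_nonneg t, abs_nonneg t]

lemma integrable_bound (τ a : ℝ) (n : ℕ) :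
    Integrable (fun t : ℝ => |t| ^ n * Real.exp (-t ^ 4 / 4 - τ * t ^ 2 / 2 + a * |t|)) := by
  apply Integrable.mono' ((integrable_abs_pow_gauss n).const_mul
    (Real.exp ((3 / 2 + |τ| / 2) ^ 2 + a ^ 2 / 2)))
  · apply Continuous.aestronglyMeasurable
    fun_prop
  · filter_upwards with t
    rw [Real.norm_eq_abs, abs_of_nonneg (by positivity)]
    calc |t| ^ n * Real.exp (-t ^ 4 / 4 - τ * t ^ 2 / 2 + a * |t|)
        ≤ |t| ^ n * (Real.exp ((3 / 2 + |τ| / 2) ^ 2 + a ^ 2 / 2) * Real.exp (-t ^ 2)) := by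
          rw [← Real.exp_add]
          exact mul_le_mul_of_nonneg_left (Real.exp_le_exp.2 (exp_bound' τ a t)) (by positivity)
      _ = Real.exp ((3 / 2 + |τ| / 2) ^ 2 + a ^ 2 / 2) * (|t| ^ n * Real.exp (-t ^ 2)) := by ring

lemma continuous_gc (τ : ℝ) (z : ℂ) : Continuous (fun t : ℝ => gc τ z t) := by
  unfold gc; fun_prop

lemma norm_gc_le (τ a : ℝ) {z : ℂ} (hz : |z.im| ≤ a) (t : ℝ) :
    ‖gc τ z t‖ ≤ Real.exp (-t ^ 4 / 4 - τ * t ^ 2 / 2 + a * |t|) := by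
  rw [norm_gc]
  apply Real.exp_le_exp.2
  have : -(z.im * t) ≤ a * |t| := by
    calc -(z.im * t) ≤ |z.im * t| := neg_le_abs _
      _ = |z.im| * |t| := abs_mul _ _
      _ ≤ a * |t| := mul_le_mul_of_nonneg_right hz (abs_nonneg t)
  linarith

lemma integrable_aux_c (τ : ℝ) (n : ℕ) (z : ℂ) :
    Integrable (fun t : ℝ => (t : ℂ) ^ n * gc τ z t) := by
  apply Integrable.mono' (integrable_bound τ (|z.im|) n)
  · exact ((Complex.continuous_ofReal.pow n).mul (continuous_gc τ z)).aestronglyMeasurable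
  · filter_upwards with t
    rw [norm_mul, norm_pow, Complex.norm_real, Real.norm_eq_abs]
    exact mul_le_mul_of_nonneg_left (norm_gc_le τ (|z.im|) le_rfl t) (by positivity)

lemma hasDerivAt_gc (τ : ℝ) (t : ℝ) (z : ℂ) :
    HasDerivAt (fun z : ℂ => gc τ z t) (Complex.I * t * gc τ z t) z := by
  have hpoly : HasDerivAt
      (fun z : ℂ => -(t : ℂ) ^ 4 / 4 - (τ : ℂ) * (t : ℂ) ^ 2 / 2 + Complex.I * z * (t : ℂ))
      (Complex.I * t) z := by
    have h3 := hasDerivAt_id z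
    have := ((hasDerivAt_const z (-(t : ℂ) ^ 4 / 4 - (τ : ℂ) * (t : ℂ) ^ 2 / 2))).add
      ((h3.const_mul (Complex.I)).mul_const ((t : ℂ)))
    refine this.congr_deriv ?_
    simp
  simpa [gc, mul_comm] using hpoly.cexp

def Wc (τ : ℝ) (n : ℕ) (z : ℂ) : ℂ := ∫ t : ℝ, (t : ℂ) ^ n * gc τ z t

lemma hasDerivAt_Wc (τ : ℝ) (n : ℕ) (z : ℂ) :
    HasDerivAt (Wc τ n) (Complex.I * Wc τ (n + 1) z) z := by
  have key := hasDerivAt_integral_of_dominated_loc_of_deriv_le (μ := volume)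
    (F := fun (x : ℂ) (t : ℝ) => (t : ℂ) ^ n * gc τ x t)
    (F' := fun (x : ℂ) (t : ℝ) => Complex.I * ((t : ℂ) ^ (n + 1) * gc τ x t))
    (x₀ := z)
    (bound := fun t : ℝ => |t| ^ (n + 1) * Real.exp (-t ^ 4 / 4 - τ * t ^ 2 / 2 + (|z.im| + 1) * |t|))
    (ball_mem_nhds _ one_pos)
    (Eventually.of_forall fun x =>
      (((Complex.continuous_ofReal.pow n).mul (continuous_gc τ x)).aestronglyMeasurable))
    (integrable_aux_c τ n z)
    ((continuous_const.mul ((Complex.continuous_ofReal.pow (n + 1)).mul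
      (continuous_gc τ z))).aestronglyMeasurable)
    (Eventually.of_forall fun t => fun x hx => by
      rw [norm_mul, Complex.norm_I, one_mul, norm_mul, norm_pow, Complex.norm_real,
        Real.norm_eq_abs]
      have him : |x.im| ≤ |z.im| + 1 := by
        have h1 : |x.im - z.im| ≤ ‖x - z‖ := by
          simpa using Complex.abs_im_le_norm (x - z)
        have h2 : ‖x - z‖ < 1 := by
          rw [mem_ball, Complex.dist_eq] at hx
          exact hx
        calc |x.im| ≤ |z.im| + |x.im - z.im| := by
              have := abs_sub_abs_le_abs_sub x.im z.im
              have := abs_abs_sub_abs_le_abs_sub x.im z.im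
              linarith [abs_sub_le x.im z.im 0]
          _ ≤ |z.im| + 1 := by linarith
      exact mul_le_mul_of_nonneg_left (norm_gc_le τ (|z.im| + 1) him t) (by positivity))
    (integrable_bound τ (|z.im| + 1) (n + 1))
    (Eventually.of_forall fun t => fun x _ => by
      have := (hasDerivAt_gc τ t x).const_mul ((t : ℂ) ^ n)
      refine this.congr_deriv ?_
      push_cast; ring)
  have h2 := key.2
  rw [MeasureTheory.integral_const_mul] at h2
  exact h2

lemma analyticOnNhd_Wc (τ : ℝ) : AnalyticOnNhd ℂ (Wc τ 0) univ := by
  rw [Complex.analyticOnNhd_univ_iff_differentiable]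
  intro z
  exact (hasDerivAt_Wc τ 0 z).differentiableAt

end PearceyAux

open PearceyAux in
theorem pearcey_Q_smooth_and_ODE (τ : ℝ) (Q : ℝ → ℂ)
    (hQ : ∀ s : ℝ, Q s =
      (1 / (2 * (π : ℂ))) *
        ∫ t : ℝ, Complex.exp (-(t : ℂ) ^ 4 / 4 - (τ : ℂ) * (t : ℂ) ^ 2 / 2
          + Complex.I * (s : ℂ) * (t : ℂ))) :
    ContDiff ℝ (⊤ : ℕ∞) Q ∧
      ∀ s : ℝ, iteratedDeriv 3 Q s - (τ : ℂ) * deriv Q s = (s : ℂ) * Q s := by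
  set c : ℂ := 1 / (2 * (π : ℂ)) with hc
  have hQeq : Q = fun s => c * W τ 0 s := by
    funext s
    rw [hQ s]
    congr 1
    unfold W g
    congr 1
    funext t
    rw [pow_zero, one_mul]
  constructor
  · have h1 : AnalyticOnNhd ℝ (Wc τ 0) univ := (analyticOnNhd_Wc τ).restrictScalars
    have h2 : AnalyticOnNhd ℝ (fun x : ℝ => (x : ℂ)) univ :=
      Complex.ofRealCLM.analyticOnNhd univ
    have h3 : AnalyticOnNhd ℝ (fun s : ℝ => Wc τ 0 (s : ℂ)) univ :=
      h1.comp h2 (Set.mapsTo_univ _ _)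
    have h4 : AnalyticOnNhd ℝ (fun s : ℝ => c * Wc τ 0 (s : ℂ)) univ :=
      analyticOnNhd_const.mul h3
    have h5 : Q = fun s : ℝ => c * Wc τ 0 (s : ℂ) := hQeq
    rw [h5]
    exact h4.contDiff
  · intro s
    have h3 : iteratedDeriv 3 Q s = c * Complex.I ^ 3 * W τ 3 s := by
      rw [hQeq, iteratedDeriv_eq]
    have h1 : deriv Q s = c * Complex.I ^ 1 * W τ 1 s := by
      rw [hQeq, ← iteratedDeriv_one, iteratedDeriv_eq]
    rw [h3, h1, hQeq]
    have hrel := W_relation τ s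
    have hI : Complex.I ^ 2 = -1 := Complex.I_sq
    have : Complex.I ^ 3 = -Complex.I := by rw [pow_succ, hI]; ring
    rw [this, pow_one]
    calc c * -Complex.I * W τ 3 s - (τ : ℂ) * (c * Complex.I * W τ 1 s)
        = -(c * Complex.I) * (W τ 3 s + (τ : ℂ) * W τ 1 s) := by ring
      _ = -(c * Complex.I) * (Complex.I * s * W τ 0 s) := by rw [hrel]
      _ = (s : ℂ) * (c * W τ 0 s) := by
          rw [show -(c * Complex.I) * (Complex.I * (s : ℂ) * W τ 0 s)
              = -(Complex.I * Complex.I) * (c * (s : ℂ) * W τ 0 s) by ring, Complex.I_mul_I]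
          ring
end
end

section
/- For every fixed τ ∈ ℝ, the function P is well defined (all four ray integrals converge absolutely), infinitely differentiable on ℝ, and satisfies the third-order linear differential equation P'''(s) − τ·P'(s) = −s·P(s) for all s ∈ ℝ. -/
open MeasureTheory Real

namespace PearceyAux

open Set

noncomputable def f (τ : ℝ) (ω : ℂ) (n : ℕ) (z : ℂ) (r : ℝ) : ℂ :=
  (-((r:ℂ)*ω))^n * Complex.exp (((r:ℂ)*ω)^4/4 - (τ:ℂ)*((r:ℂ)*ω)^2/2 - z*((r:ℂ)*ω))

noncomputable def J (τ : ℝ) (ω : ℂ) (n : ℕ) (z : ℂ) : ℂ := ∫ r in Ioi (0:ℝ), f τ ω n z r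

variable {τ : ℝ} {z : ℂ} {ω : ℂ} {n : ℕ}

lemma theta_eq (hω4 : ω^4 = -1) (τ : ℝ) (z : ℂ) (r : ℝ) :
    ((r:ℂ)*ω)^4/4 - (τ:ℂ)*((r:ℂ)*ω)^2/2 - z*((r:ℂ)*ω)
      = ((-(r^4)/4 : ℝ) : ℂ) + ((-(τ*r^2/2) : ℝ) : ℂ) * ω^2 + ((-r : ℝ) : ℂ) * (z*ω) := by
  rw [mul_pow, mul_pow, hω4]
  simp only [Complex.ofReal_div, Complex.ofReal_neg, Complex.ofReal_mul, Complex.ofReal_pow,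
    Complex.ofReal_ofNat]
  ring

lemma re_theta (hω4 : ω^4 = -1) (hω2 : (ω^2).re = 0) (τ : ℝ) (z : ℂ) (r : ℝ) :
    (((r:ℂ)*ω)^4/4 - (τ:ℂ)*((r:ℂ)*ω)^2/2 - z*((r:ℂ)*ω)).re
      = -(r^4)/4 - r*(z*ω).re := by
  rw [theta_eq hω4]
  simp only [Complex.add_re, Complex.ofReal_re, Complex.re_ofReal_mul, hω2]
  ring

lemma norm_f (hω : ‖ω‖ = 1) (hω4 : ω^4 = -1) (hω2 : (ω^2).re = 0)
    {r : ℝ} (hr : 0 ≤ r) :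
    ‖f τ ω n z r‖ = r^n * Real.exp (-(r^4)/4 - r*(z*ω).re) := by
  rw [f, norm_mul, norm_pow, norm_neg, norm_mul]
  simp only [Complex.norm_real, Real.norm_eq_abs, hω, Complex.norm_exp,
    re_theta hω4 hω2, abs_of_nonneg hr, mul_one]

lemma bound_poly (b : ℝ) {r : ℝ} (hr : 0 ≤ r) :
    -(r^4)/4 + b*r ≤ (|b|+1)^2 + 1 - r := by
  have h1 : b ≤ |b| := le_abs_self b
  have h2 : 0 ≤ |b| := abs_nonneg b
  nlinarith [sq_nonneg (r^2 - 2), sq_nonneg ((|b|+1) - r), sq_nonneg r]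

lemma key_int (c : ℝ) (k : ℕ) :
    IntegrableOn (fun r : ℝ => r^k * Real.exp (-(r^4)/4 + c*r)) (Ioi 0) := by
  have hC : IntegrableOn (fun r : ℝ => Real.exp ((|c + k|+1)^2 + 1) * Real.exp (-r))
      (Ioi (0:ℝ)) := by
    have := (exp_neg_integrableOn_Ioi (0:ℝ) (b := 1) one_pos)
    simpa [IntegrableOn] using this.const_mul (Real.exp ((|c + k|+1)^2 + 1))
  refine Integrable.mono' hC ?_ ?_
  · exact ((continuous_pow k).mul
      (Real.continuous_exp.comp (by continuity))).aestronglyMeasurable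
  · filter_upwards [ae_restrict_mem measurableSet_Ioi] with r hr
    have hr0 : (0:ℝ) ≤ r := le_of_lt hr
    have h1 : r^k ≤ Real.exp (k*r) := by
      calc r^k ≤ (Real.exp r)^k := by
            exact pow_le_pow_left₀ hr0 (by linarith [Real.add_one_le_exp r]) k
        _ = Real.exp (k*r) := by rw [← Real.exp_nat_mul]
    have h2 : -(r^4)/4 + (c+k)*r ≤ (|c+k|+1)^2 + 1 - r := bound_poly _ hr0
    rw [Real.norm_eq_abs, abs_of_nonneg (by positivity)]
    calc r^k * Real.exp (-(r^4)/4 + c*r) ≤ Real.exp (k*r) * Real.exp (-(r^4)/4 + c*r) := by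
          exact mul_le_mul_of_nonneg_right h1 (Real.exp_pos _).le
      _ = Real.exp (-(r^4)/4 + (c+k)*r) := by rw [← Real.exp_add]; ring_nf
      _ ≤ Real.exp (((|c+k|+1)^2 + 1) - r) := Real.exp_le_exp.2 h2
      _ = Real.exp ((|c + k|+1)^2 + 1) * Real.exp (-r) := by rw [← Real.exp_add]; ring_nf

lemma integrable_f (hω : ‖ω‖ = 1) (hω4 : ω^4 = -1) (hω2 : (ω^2).re = 0)
    (n : ℕ) (z : ℂ) : IntegrableOn (f τ ω n z) (Ioi 0) := by
  have hre : |(z*ω).re| ≤ ‖z‖ := by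
    calc |(z*ω).re| ≤ ‖z*ω‖ := Complex.abs_re_le_norm _
      _ = ‖z‖ := by rw [norm_mul, hω, mul_one]
  refine Integrable.mono' (key_int (‖z‖) n) ?_ ?_
  · apply Continuous.aestronglyMeasurable
    unfold f
    continuity
  · filter_upwards [ae_restrict_mem measurableSet_Ioi] with r hr
    have hr0 : (0:ℝ) ≤ r := le_of_lt hr
    rw [norm_f hω hω4 hω2 hr0]
    have h1 : -(r*(z*ω).re) ≤ ‖z‖ * r := by
      calc -(r*(z*ω).re) ≤ |r*(z*ω).re| := neg_le_abs _
        _ = r * |(z*ω).re| := by rw [abs_mul, abs_of_nonneg hr0]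
        _ ≤ r * ‖z‖ := mul_le_mul_of_nonneg_left hre hr0
        _ = ‖z‖ * r := mul_comm _ _
    have := Real.exp_le_exp.2
      (by linarith : -(r^4)/4 - r*(z*ω).re ≤ -(r^4)/4 + ‖z‖ * r)
    exact mul_le_mul_of_nonneg_left this (by positivity)

/-- derivative of `f` in the parameter `z` -/
lemma hasDerivAt_f_s (r : ℝ) (z : ℂ) :
    HasDerivAt (fun x : ℂ => f τ ω n x r) (f τ ω (n+1) z r) z := by
  have h0 : HasDerivAt (fun x : ℂ =>
      ((r:ℂ)*ω)^4/4 - (τ:ℂ)*((r:ℂ)*ω)^2/2 - x*((r:ℂ)*ω)) (-((r:ℂ)*ω)) z := by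
    simpa using ((hasDerivAt_id z).mul_const ((r:ℂ)*ω)).const_sub
      (((r:ℂ)*ω)^4/4 - (τ:ℂ)*((r:ℂ)*ω)^2/2)
  have h1 := h0.cexp.const_mul ((-((r:ℂ)*ω))^n)
  refine h1.congr_deriv ?_
  rw [f, pow_succ]
  ring

lemma hasDerivAt_J (hω : ‖ω‖ = 1) (hω4 : ω^4 = -1) (hω2 : (ω^2).re = 0)
    (n : ℕ) (z : ℂ) : HasDerivAt (J τ ω n) (J τ ω (n+1) z) z := by
  have key := hasDerivAt_integral_of_dominated_loc_of_deriv_le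
    (F := fun x : ℂ => fun r : ℝ => f τ ω n x r)
    (F' := fun x : ℂ => fun r : ℝ => f τ ω (n+1) x r)
    (x₀ := z) (s := Metric.ball z 1) (μ := volume.restrict (Ioi 0))
    (bound := fun r => r^(n+1) * Real.exp (-(r^4)/4 + (‖z‖ + 1)*r))
    (Metric.ball_mem_nhds z one_pos) ?_ ((integrable_f hω hω4 hω2 n z)) ?_ ?_ ?_ ?_
  · exact key.2
  · filter_upwards with x
    exact (integrable_f hω hω4 hω2 n x).aestronglyMeasurable
  · exact (integrable_f hω hω4 hω2 (n+1) z).aestronglyMeasurable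
  · filter_upwards [ae_restrict_mem measurableSet_Ioi] with r hr x hx
    have hr0 : (0:ℝ) ≤ r := le_of_lt hr
    rw [norm_f hω hω4 hω2 hr0]
    have hx1 : ‖x‖ ≤ ‖z‖ + 1 := by
      have hd : ‖x - z‖ ≤ 1 := by
        rw [Metric.mem_ball, Complex.dist_eq] at hx
        exact hx.le
      calc ‖x‖ = ‖z + (x - z)‖ := by ring_nf
        _ ≤ ‖z‖ + ‖x - z‖ := norm_add_le _ _
        _ ≤ ‖z‖ + 1 := by linarith
    have hre : |(x*ω).re| ≤ ‖x‖ := by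
      calc |(x*ω).re| ≤ ‖x*ω‖ := Complex.abs_re_le_norm _
        _ = ‖x‖ := by rw [norm_mul, hω, mul_one]
    have h1 : -(r*(x*ω).re) ≤ (‖z‖ + 1)*r := by
      calc -(r*(x*ω).re) ≤ |r*(x*ω).re| := neg_le_abs _
        _ = r * |(x*ω).re| := by rw [abs_mul, abs_of_nonneg hr0]
        _ ≤ r * (‖z‖ + 1) := by
            exact mul_le_mul_of_nonneg_left (hre.trans hx1) hr0
        _ = (‖z‖ + 1)*r := mul_comm _ _
    have := Real.exp_le_exp.2
      (by linarith : -(r^4)/4 - r*(x*ω).re ≤ -(r^4)/4 + (‖z‖ + 1)*r)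
    exact mul_le_mul_of_nonneg_left this (by positivity)
  · exact key_int (‖z‖ + 1) (n+1)
  · filter_upwards with r x _
    exact hasDerivAt_f_s r x

lemma hasDerivAt_exp_theta (r : ℝ) :
    HasDerivAt (fun r : ℝ => Complex.exp (((r:ℂ)*ω)^4/4 - (τ:ℂ)*((r:ℂ)*ω)^2/2
        - z*((r:ℂ)*ω)))
      ((ω*(((r:ℂ)*ω)^3 - (τ:ℂ)*((r:ℂ)*ω) - z)) *
        Complex.exp (((r:ℂ)*ω)^4/4 - (τ:ℂ)*((r:ℂ)*ω)^2/2 - z*((r:ℂ)*ω))) r := by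
  have base : ∀ w : ℂ, HasDerivAt (fun w : ℂ => w*ω) ω w := by
    intro w
    simpa using (hasDerivAt_id w).mul_const ω
  have h : HasDerivAt (fun w : ℂ => (w*ω)^4/4 - (τ:ℂ)*(w*ω)^2/2 - z*(w*ω))
      (ω*((((r:ℂ))*ω)^3 - (τ:ℂ)*(((r:ℂ))*ω) - z)) ((r:ℂ)) := by
    have h4 := ((base ((r:ℂ))).pow 4).div_const 4
    have h2 := (((base ((r:ℂ))).pow 2).div_const 2).const_mul (τ:ℂ)
    have h1 := (base ((r:ℂ))).const_mul z
    have := (h4.sub h2).sub h1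
    convert this using 1
    · rfl
    · rfl
    · funext w
      simp
      ring
    · push_cast
      ring
  have := (h.cexp).comp_ofReal
  convert this using 1
  ring

lemma ray_identity (hω : ‖ω‖ = 1) (hω4 : ω^4 = -1) (hω2 : (ω^2).re = 0) (z : ℂ) :
    (-ω) * J τ ω 3 z + ((τ:ℂ)*ω) * J τ ω 1 z + (-z*ω) * J τ ω 0 z = -1 := by
  set u : ℝ → ℂ := fun r => f τ ω 0 z r with hu
  set v : ℝ → ℂ := fun r => (-ω) * f τ ω 3 z r + ((τ:ℂ)*ω) * f τ ω 1 z r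
      + (-z*ω) * f τ ω 0 z r with hv
  have hderiv : ∀ r : ℝ, HasDerivAt u (v r) r := by
    intro r
    have := hasDerivAt_exp_theta (τ := τ) (z := z) (ω := ω) r
    convert this using 1
    · funext x
      simp [hu, f]
    · simp only [hv, f]
      ring
  have hvint : IntegrableOn v (Ioi 0) := by
    exact (((integrable_f hω hω4 hω2 3 z).const_mul _).add
      ((integrable_f hω hω4 hω2 1 z).const_mul _)).add
      ((integrable_f hω hω4 hω2 0 z).const_mul _)
  have htend : Filter.Tendsto u Filter.atTop (nhds 0) := by
    have hb : ∀ᶠ r : ℝ in Filter.atTop,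
        ‖u r‖ ≤ Real.exp ((|(-(z*ω).re)|+1)^2 + 1) * Real.exp (-r) := by
      filter_upwards [Filter.eventually_ge_atTop (0:ℝ)] with r hr
      rw [hu]
      rw [norm_f hω hω4 hω2 hr, pow_zero, one_mul, ← Real.exp_add]
      apply Real.exp_le_exp.2
      have := bound_poly (-(z*ω).re) hr
      have he : -(r^4)/4 - r*(z*ω).re = -(r^4)/4 + (-(z*ω).re)*r := by ring
      rw [he]
      linarith
    have ht : Filter.Tendsto (fun r : ℝ =>
        Real.exp ((|(-(z*ω).re)|+1)^2 + 1) * Real.exp (-r)) Filter.atTop (nhds 0) := by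
      rw [show (0:ℝ) = Real.exp ((|(-(z*ω).re)|+1)^2 + 1) * 0 by ring]
      exact Real.tendsto_exp_neg_atTop_nhds_zero.const_mul _
    exact squeeze_zero_norm' hb ht
  have hcont : ContinuousWithinAt u (Ici 0) 0 :=
    (hderiv 0).continuousAt.continuousWithinAt
  have hint := integral_Ioi_of_hasDerivAt_of_tendsto hcont
    (fun x _ => hderiv x) hvint htend
  have hu0 : u 0 = 1 := by simp [hu, f]
  rw [hu0] at hint
  have hsplit : ∫ r in Ioi (0:ℝ), v r
      = (-ω) * J τ ω 3 z + ((τ:ℂ)*ω) * J τ ω 1 z + (-z*ω) * J τ ω 0 z := by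
    have i3 : Integrable (fun r => -ω * f τ ω 3 z r) (volume.restrict (Ioi 0)) :=
      (integrable_f hω hω4 hω2 3 z).const_mul _
    have i1 : Integrable (fun r => (τ:ℂ)*ω * f τ ω 1 z r) (volume.restrict (Ioi 0)) :=
      (integrable_f hω hω4 hω2 1 z).const_mul _
    have i0 : Integrable (fun r => -z*ω * f τ ω 0 z r) (volume.restrict (Ioi 0)) :=
      (integrable_f hω hω4 hω2 0 z).const_mul _
    have i31 : Integrable (fun r => -ω * f τ ω 3 z r + (τ:ℂ)*ω * f τ ω 1 z r)
        (volume.restrict (Ioi 0)) := i3.add i1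
    simp only [hv]
    rw [integral_add i31 i0, integral_add i3 i1,
      integral_const_mul, integral_const_mul, integral_const_mul]
    rfl
  rw [hsplit] at hint
  rw [hint]
  ring

def Nice (ω : ℂ) : Prop := ‖ω‖ = 1 ∧ ω^4 = -1 ∧ (ω^2).re = 0

variable {ω₁ ω₂ ω₃ ω₄ : ℂ}

noncomputable def PP (τ : ℝ) (ω₁ ω₂ ω₃ ω₄ : ℂ) (n : ℕ) (z : ℂ) : ℂ :=
  (1/(2*(Real.pi:ℂ)*Complex.I)) *
    (ω₁ * J τ ω₁ n z - ω₂ * J τ ω₂ n z + ω₃ * J τ ω₃ n z - ω₄ * J τ ω₄ n z)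

lemma hasDerivAt_PP (h₁ : Nice ω₁) (h₂ : Nice ω₂) (h₃ : Nice ω₃) (h₄ : Nice ω₄)
    (n : ℕ) (z : ℂ) :
    HasDerivAt (PP τ ω₁ ω₂ ω₃ ω₄ n) (PP τ ω₁ ω₂ ω₃ ω₄ (n+1) z) z := by
  unfold PP
  exact (((((hasDerivAt_J h₁.1 h₁.2.1 h₁.2.2 n z).const_mul ω₁).sub
    ((hasDerivAt_J h₂.1 h₂.2.1 h₂.2.2 n z).const_mul ω₂)).add
    ((hasDerivAt_J h₃.1 h₃.2.1 h₃.2.2 n z).const_mul ω₃)).sub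
    ((hasDerivAt_J h₄.1 h₄.2.1 h₄.2.2 n z).const_mul ω₄)).const_mul _

lemma ode_PP (h₁ : Nice ω₁) (h₂ : Nice ω₂) (h₃ : Nice ω₃) (h₄ : Nice ω₄) (z : ℂ) :
    PP τ ω₁ ω₂ ω₃ ω₄ 3 z - (τ:ℂ) * PP τ ω₁ ω₂ ω₃ ω₄ 1 z
      = -z * PP τ ω₁ ω₂ ω₃ ω₄ 0 z := by
  have r₁ := ray_identity (τ := τ) h₁.1 h₁.2.1 h₁.2.2 z
  have r₂ := ray_identity (τ := τ) h₂.1 h₂.2.1 h₂.2.2 z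
  have r₃ := ray_identity (τ := τ) h₃.1 h₃.2.1 h₃.2.2 z
  have r₄ := ray_identity (τ := τ) h₄.1 h₄.2.1 h₄.2.2 z
  unfold PP
  linear_combination (-(1/(2*(Real.pi:ℂ)*Complex.I))) * r₁
    + (1/(2*(Real.pi:ℂ)*Complex.I)) * r₂
    + (-(1/(2*(Real.pi:ℂ)*Complex.I))) * r₃
    + (1/(2*(Real.pi:ℂ)*Complex.I)) * r₄

lemma integral_combine (h₁ : Nice ω₁) (h₂ : Nice ω₂) (h₃ : Nice ω₃) (h₄ : Nice ω₄)
    (z : ℂ) :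
    ∫ r in Ioi (0:ℝ), (ω₁ * f τ ω₁ 0 z r - ω₂ * f τ ω₂ 0 z r
        + ω₃ * f τ ω₃ 0 z r - ω₄ * f τ ω₄ 0 z r)
      = ω₁ * J τ ω₁ 0 z - ω₂ * J τ ω₂ 0 z + ω₃ * J τ ω₃ 0 z - ω₄ * J τ ω₄ 0 z := by
  have i1 : Integrable (fun r => ω₁ * f τ ω₁ 0 z r) (volume.restrict (Ioi 0)) :=
    (integrable_f h₁.1 h₁.2.1 h₁.2.2 0 z).const_mul _
  have i2 : Integrable (fun r => ω₂ * f τ ω₂ 0 z r) (volume.restrict (Ioi 0)) :=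
    (integrable_f h₂.1 h₂.2.1 h₂.2.2 0 z).const_mul _
  have i3 : Integrable (fun r => ω₃ * f τ ω₃ 0 z r) (volume.restrict (Ioi 0)) :=
    (integrable_f h₃.1 h₃.2.1 h₃.2.2 0 z).const_mul _
  have i4 : Integrable (fun r => ω₄ * f τ ω₄ 0 z r) (volume.restrict (Ioi 0)) :=
    (integrable_f h₄.1 h₄.2.1 h₄.2.2 0 z).const_mul _
  have i12 : Integrable (fun r => ω₁ * f τ ω₁ 0 z r - ω₂ * f τ ω₂ 0 z r)
      (volume.restrict (Ioi 0)) := i1.sub i2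
  have i123 : Integrable (fun r => ω₁ * f τ ω₁ 0 z r - ω₂ * f τ ω₂ 0 z r
      + ω₃ * f τ ω₃ 0 z r) (volume.restrict (Ioi 0)) := i12.add i3
  rw [integral_sub i123 i4, integral_add i12 i3, integral_sub i1 i2,
    integral_const_mul, integral_const_mul, integral_const_mul, integral_const_mul]
  rfl

lemma nice_of (c : ℝ) (h4 : Complex.exp (((4*c : ℝ) : ℂ) * Complex.I) = -1)
    (h2 : Real.cos (2*c) = 0) : Nice (Complex.exp ((c:ℂ) * Complex.I)) := by
  refine ⟨Complex.norm_exp_ofReal_mul_I c, ?_, ?_⟩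
  · rw [← Complex.exp_nat_mul]
    rw [show ((4:ℕ):ℂ) * ((c:ℂ) * Complex.I) = ((4*c : ℝ):ℂ) * Complex.I by push_cast; ring]
    exact h4
  · rw [← Complex.exp_nat_mul,
      show ((2:ℕ):ℂ) * ((c:ℂ) * Complex.I) = ((2*c : ℝ):ℂ) * Complex.I by push_cast; ring,
      Complex.exp_ofReal_mul_I_re, h2]

end PearceyAux

open PearceyAux

/-- For every fixed `τ ∈ ℝ`, the contour integral
`P(s) = (1/(2πi)) ∫_Σ exp(μ⁴/4 − τμ²/2 − sμ) dμ` over the four rays of arguments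
`±π/4, ±3π/4` is well defined (all four ray integrals converge absolutely),
infinitely differentiable in `s`, and satisfies `P'''(s) − τ P'(s) = −s P(s)`. -/
theorem pearcey_P_welldefined_smooth_and_ODE (τ : ℝ)
    (θ : ℝ → ℂ → ℂ)
    (hθ : ∀ (s : ℝ) (μ : ℂ), θ s μ = μ ^ 4 / 4 - (τ : ℂ) * μ ^ 2 / 2 - (s : ℂ) * μ)
    (P : ℝ → ℂ)
    (hP : ∀ s : ℝ, P s =
      (1 / (2 * (π : ℂ) * Complex.I)) *
        ∫ r in Set.Ioi (0 : ℝ),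
          (Complex.exp (Complex.I * (π / 4)) *
              Complex.exp (θ s ((r : ℂ) * Complex.exp (Complex.I * (π / 4))))
            - Complex.exp (Complex.I * (3 * π / 4)) *
              Complex.exp (θ s ((r : ℂ) * Complex.exp (Complex.I * (3 * π / 4))))
            + Complex.exp (-(Complex.I * (3 * π / 4))) *
              Complex.exp (θ s ((r : ℂ) * Complex.exp (-(Complex.I * (3 * π / 4)))))
            - Complex.exp (-(Complex.I * (π / 4))) *
              Complex.exp (θ s ((r : ℂ) * Complex.exp (-(Complex.I * (π / 4))))))) :
    (∀ s : ℝ,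
        IntegrableOn (fun r : ℝ =>
          Complex.exp (θ s ((r : ℂ) * Complex.exp (Complex.I * (π / 4))))) (Set.Ioi 0) ∧
        IntegrableOn (fun r : ℝ =>
          Complex.exp (θ s ((r : ℂ) * Complex.exp (Complex.I * (3 * π / 4))))) (Set.Ioi 0) ∧
        IntegrableOn (fun r : ℝ =>
          Complex.exp (θ s ((r : ℂ) * Complex.exp (-(Complex.I * (3 * π / 4)))))) (Set.Ioi 0) ∧
        IntegrableOn (fun r : ℝ =>
          Complex.exp (θ s ((r : ℂ) * Complex.exp (-(Complex.I * (π / 4)))))) (Set.Ioi 0)) ∧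
      ContDiff ℝ (⊤ : ℕ∞) P ∧
      ∀ s : ℝ, iteratedDeriv 3 P s - (τ : ℂ) * deriv P s = -(s : ℂ) * P s := by
  have e₁ : Complex.exp (Complex.I * (π / 4))
      = Complex.exp (((π/4 : ℝ):ℂ) * Complex.I) := by congr 1; push_cast; ring
  have e₂ : Complex.exp (Complex.I * (3 * π / 4))
      = Complex.exp (((3*π/4 : ℝ):ℂ) * Complex.I) := by congr 1; push_cast; ring
  have e₃ : Complex.exp (-(Complex.I * (3 * π / 4)))
      = Complex.exp (((-(3*π/4) : ℝ):ℂ) * Complex.I) := by congr 1; push_cast; ring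
  have e₄ : Complex.exp (-(Complex.I * (π / 4)))
      = Complex.exp (((-(π/4) : ℝ):ℂ) * Complex.I) := by congr 1; push_cast; ring
  have n₁ : Nice (Complex.exp (Complex.I * (π / 4))) := by
    rw [e₁]
    refine nice_of _ ?_ ?_
    · rw [show (4*(π/4) : ℝ) = π by ring]
      exact Complex.exp_pi_mul_I
    · rw [show (2*(π/4) : ℝ) = π/2 by ring, Real.cos_pi_div_two]
  have n₂ : Nice (Complex.exp (Complex.I * (3 * π / 4))) := by
    rw [e₂]
    refine nice_of _ ?_ ?_
    · rw [show (((4*(3*π/4) : ℝ)):ℂ) * Complex.I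
        = (π:ℂ) * Complex.I + 2*(π:ℂ)*Complex.I by push_cast; ring,
        Complex.exp_add, Complex.exp_pi_mul_I, Complex.exp_two_pi_mul_I]
      norm_num
    · rw [show (2*(3*π/4) : ℝ) = π/2 + π by ring, Real.cos_add_pi, Real.cos_pi_div_two,
        neg_zero]
  have n₃ : Nice (Complex.exp (-(Complex.I * (3 * π / 4)))) := by
    rw [e₃]
    refine nice_of _ ?_ ?_
    · rw [show (((4*(-(3*π/4)) : ℝ)):ℂ) * Complex.I
        = -((π:ℂ) * Complex.I + 2*(π:ℂ)*Complex.I) by push_cast; ring,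
        Complex.exp_neg, Complex.exp_add, Complex.exp_pi_mul_I, Complex.exp_two_pi_mul_I]
      norm_num
    · rw [show (2*(-(3*π/4)) : ℝ) = -(π/2 + π) by ring, Real.cos_neg, Real.cos_add_pi,
        Real.cos_pi_div_two, neg_zero]
  have n₄ : Nice (Complex.exp (-(Complex.I * (π / 4)))) := by
    rw [e₄]
    refine nice_of _ ?_ ?_
    · rw [show (((4*(-(π/4)) : ℝ)):ℂ) * Complex.I
        = -((π:ℂ) * Complex.I) by push_cast; ring,
        Complex.exp_neg, Complex.exp_pi_mul_I]
      norm_num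
    · rw [show (2*(-(π/4)) : ℝ) = -(π/2) by ring, Real.cos_neg, Real.cos_pi_div_two]
  have key : ∀ (ω : ℂ), Nice ω → ∀ s : ℝ,
      IntegrableOn (fun r : ℝ => Complex.exp (θ s ((r:ℂ) * ω))) (Set.Ioi 0) := by
    intro ω h s
    have hfe : (fun r : ℝ => Complex.exp (θ s ((r:ℂ) * ω))) = f τ ω 0 (s:ℂ) := by
      funext r
      rw [f, pow_zero, one_mul, hθ]
    rw [hfe]
    exact integrable_f h.1 h.2.1 h.2.2 0 (s:ℂ)
  set Ω₁ := Complex.exp (Complex.I * (π / 4))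
  set Ω₂ := Complex.exp (Complex.I * (3 * π / 4))
  set Ω₃ := Complex.exp (-(Complex.I * (3 * π / 4)))
  set Ω₄ := Complex.exp (-(Complex.I * (π / 4)))
  have hPeq : P = fun s : ℝ => PP τ Ω₁ Ω₂ Ω₃ Ω₄ 0 ((s:ℝ):ℂ) := by
    funext s
    rw [hP s, PP]
    congr 1
    rw [← integral_combine n₁ n₂ n₃ n₄ ((s:ℝ):ℂ)]
    congr 1
    funext r
    simp only [f, pow_zero, one_mul, hθ]
  have hder : ∀ (n : ℕ) (s : ℝ), HasDerivAt (fun t : ℝ => PP τ Ω₁ Ω₂ Ω₃ Ω₄ n ((t:ℝ):ℂ))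
      (PP τ Ω₁ Ω₂ Ω₃ Ω₄ (n+1) ((s:ℝ):ℂ)) s :=
    fun n s => (hasDerivAt_PP n₁ n₂ n₃ n₄ n ((s:ℝ):ℂ)).comp_ofReal
  have hIter : ∀ m : ℕ, iteratedDeriv m P = fun s : ℝ => PP τ Ω₁ Ω₂ Ω₃ Ω₄ m ((s:ℝ):ℂ) := by
    intro m
    induction m with
    | zero => rw [iteratedDeriv_zero, hPeq]
    | succ m ih =>
      rw [iteratedDeriv_succ, ih]
      funext x
      exact (hder m x).deriv
  refine ⟨fun s => ⟨key _ n₁ s, key _ n₂ s, key _ n₃ s, key _ n₄ s⟩, ?_, ?_⟩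
  · have hD : Differentiable ℂ (PP τ Ω₁ Ω₂ Ω₃ Ω₄ 0) :=
      fun w => (hasDerivAt_PP n₁ n₂ n₃ n₄ 0 w).differentiableAt
    have hana : ContDiff ℂ ⊤ (PP τ Ω₁ Ω₂ Ω₃ Ω₄ 0) :=
      ((hD.differentiableOn).analyticOnNhd isOpen_univ).contDiff
    have : ContDiff ℝ (⊤ : ℕ∞) (PP τ Ω₁ Ω₂ Ω₃ Ω₄ 0) := (hana.restrict_scalars ℝ).of_le le_top
    have hc := this.comp Complex.ofRealCLM.contDiff
    rw [hPeq]
    exact hc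
  · intro s
    have hd : deriv P s = PP τ Ω₁ Ω₂ Ω₃ Ω₄ 1 ((s:ℝ):ℂ) := by
      rw [hPeq]
      exact (hder 0 s).deriv
    rw [hIter 3, hd, hPeq]
    exact ode_PP n₁ n₂ n₃ n₄ ((s:ℝ):ℂ)
end

section
/- Let N ≥ 1 and set A₁ := (1/(N+1))·diag(−N, 1, …, 1) ∈ M_{N+1}(ℂ). Let Γ₁ : ℝ → M_{N+1}(ℂ) be differentiable with block decomposition Γ₁(s) = [[−δ(s), p(s)ᵀ],[q(s), Δ(s)]] (δ scalar, p, q ∈ ℂ^N, Δ an N×N matrix), and let Γ₂ : ℝ → M_{N+1}(ℂ) be any function. If for all s ∈ ℝ one has ∂_s Γ₁(s) + [Γ₂(s), A₁] − [Γ₁(s), A₁]·Γ₁(s) = 0 (where [X,Y] := XY − YX), then δ'(s) = −p(s)ᵀq(s) for all s ∈ ℝ. -/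
/-!
Only the `(1,1)` entry of the equation is needed. Since `A₁ = diag(a)` is diagonal, `[X, A₁]` has
entries `(a_j − a_i) X_ij`: it vanishes on the diagonal, and its first row is `(0, pᵀ)` because
`a_j − a_1 = 1/(N+1) + N/(N+1) = 1` for `j > 1`. So the `(1,1)` entry reads `−δ' − pᵀq = 0`.
-/

open Matrix BigOperators

namespace PearceyDelta

/-- `A₁ = (1/(N+1)) diag(−N, 1, …, 1)` in `(1,N)`-block form. -/
noncomputable def A1 (N : ℕ) : Matrix (Fin 1 ⊕ Fin N) (Fin 1 ⊕ Fin N) ℂ :=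
  (((N : ℂ) + 1)⁻¹) • Matrix.fromBlocks ((-(N : ℂ)) • 1) 0 0 1

theorem _root_.Matrix.commutator_diagonal_apply {n R : Type*} [DecidableEq n] [Fintype n]
    [CommRing R] (X : Matrix n n R) (d : n → R) (i j : n) :
    (X * diagonal d - diagonal d * X) i j = (d j - d i) * X i j := by
  rw [Matrix.sub_apply, mul_diagonal, diagonal_mul]
  ring

theorem A1_eq_diagonal (N : ℕ) :
    A1 N = diagonal (Sum.elim (fun _ => -(N : ℂ) * ((N : ℂ) + 1)⁻¹) fun _ => ((N : ℂ) + 1)⁻¹) := by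
  ext (i | i) (j | j)
  · simp [A1, mul_comm, Subsingleton.elim i j]
  · simp [A1]
  · simp [A1]
  · by_cases h : i = j <;> simp [A1, one_apply, h]

variable {N : ℕ} (X : Matrix (Fin 1 ⊕ Fin N) (Fin 1 ⊕ Fin N) ℂ) (i : Fin 1)

theorem commutator_A1_apply_inl_inl (i' : Fin 1) :
    (X * A1 N - A1 N * X) (.inl i) (.inl i') = 0 := by
  rw [Subsingleton.elim i' i, A1_eq_diagonal, commutator_diagonal_apply, sub_self, zero_mul]

theorem commutator_A1_apply_inl_inr (j : Fin N) :
    (X * A1 N - A1 N * X) (.inl i) (.inr j) = X (.inl i) (.inr j) := by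
  have hN : (N : ℂ) + 1 ≠ 0 := by exact_mod_cast N.succ_ne_zero
  rw [A1_eq_diagonal, commutator_diagonal_apply, Sum.elim_inr, Sum.elim_inl]
  field_simp
  ring

theorem commutator_A1_mul_self_apply_inl_inl (i' : Fin 1) :
    ((X * A1 N - A1 N * X) * X) (.inl i) (.inl i') =
      ∑ j, X (.inl i) (.inr j) * X (.inr j) (.inl i') := by
  simp only [mul_apply, Fintype.sum_sum_type, commutator_A1_apply_inl_inl,
    commutator_A1_apply_inl_inr, zero_mul, Finset.sum_const_zero, zero_add]

theorem deriv_delta_eq_neg_pTq_general (N : ℕ)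
    (δ : ℝ → ℂ) (p q : ℝ → Fin N → ℂ) (Δ : ℝ → Fin N → Fin N → ℂ)
    (Γ₁ : ℝ → Matrix (Fin 1 ⊕ Fin N) (Fin 1 ⊕ Fin N) ℂ)
    (hΓ₁ : ∀ s, Γ₁ s = Matrix.fromBlocks
      (Matrix.of fun _ _ => -δ s)
      (Matrix.of fun _ j => p s j)
      (Matrix.of fun i _ => q s i)
      (Matrix.of (Δ s)))
    (Γ₂ : ℝ → Matrix (Fin 1 ⊕ Fin N) (Fin 1 ⊕ Fin N) ℂ)
    (heq : ∀ s : ℝ,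
      (Matrix.of fun i j => deriv (fun u : ℝ => Γ₁ u i j) s)
        + (Γ₂ s * A1 N - A1 N * Γ₂ s)
        - (Γ₁ s * A1 N - A1 N * Γ₁ s) * Γ₁ s = 0) :
    ∀ s : ℝ, deriv δ s = -∑ i, p s i * q s i := by
  intro s
  have h := congr_fun₂ (heq s) (.inl 0) (.inl 0)
  have hderiv : deriv (fun u => Γ₁ u (.inl 0) (.inl 0)) s = -deriv δ s := by
    simp only [hΓ₁, fromBlocks_apply₁₁, of_apply]
    exact deriv.neg
  rw [Matrix.sub_apply, Matrix.add_apply, of_apply, hderiv, commutator_A1_apply_inl_inl,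
    commutator_A1_mul_self_apply_inl_inl, Matrix.zero_apply] at h
  simp only [hΓ₁, fromBlocks_apply₁₂, fromBlocks_apply₂₁, of_apply] at h
  linear_combination -h

/-- if `Γ₁(s) = [[−δ(s), p(s)ᵀ],[q(s), Δ(s)]]` is differentiable and
`∂ₛΓ₁ + [Γ₂, A₁] − [Γ₁, A₁]Γ₁ = 0` for all `s`, then `δ'(s) = −p(s)ᵀq(s)`. -/
theorem deriv_delta_eq_neg_pTq (N : ℕ) (hN : 1 ≤ N)
    (δ : ℝ → ℂ) (p q : ℝ → Fin N → ℂ) (Δ : ℝ → Fin N → Fin N → ℂ)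
    (hδ : Differentiable ℝ δ) (hp : Differentiable ℝ p) (hq : Differentiable ℝ q)
    (hΔ : Differentiable ℝ Δ)
    (Γ₁ : ℝ → Matrix (Fin 1 ⊕ Fin N) (Fin 1 ⊕ Fin N) ℂ)
    (hΓ₁ : ∀ s, Γ₁ s = Matrix.fromBlocks
      (Matrix.of fun _ _ => -δ s)
      (Matrix.of fun _ j => p s j)
      (Matrix.of fun i _ => q s i)
      (Matrix.of (Δ s)))
    (Γ₂ : ℝ → Matrix (Fin 1 ⊕ Fin N) (Fin 1 ⊕ Fin N) ℂ)
    (heq : ∀ s : ℝ,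
      (Matrix.of fun i j => deriv (fun u : ℝ => Γ₁ u i j) s)
        + (Γ₂ s * A1 N - A1 N * Γ₂ s)
        - (Γ₁ s * A1 N - A1 N * Γ₁ s) * Γ₁ s = 0) :
    ∀ s : ℝ, deriv δ s = -∑ i, p s i * q s i :=
  deriv_delta_eq_neg_pTq_general N δ p q Δ Γ₁ hΓ₁ Γ₂ heq

end PearceyDelta
end

section
/- Let a₁, …, a_N ∈ ℝ and let p, q : ℝ² → ℂ^N be C^∞ functions of (s,τ) such that, for every fixed τ, they satisfy the coupled third-order system ∂_{sss} p + 3(∂_s pᵀ q)·p + 3(pᵀq)·∂_s p − τ·∂_s p + D(s)·p = 0 and ∂_{sss} q + 3(pᵀ ∂_s q)·q + 3(pᵀq)·∂_s q − τ·∂_s q − D(s)·q = 0 (with D(s) := diag(a₁+s, …, a_N+s)), as well as the coupled nonlinear heat system −(1/2)∂_{ss} p − ∂_τ p = (pᵀq)·p and −(1/2)∂_{ss} q + ∂_τ q = (pᵀq)·q. Then the scalar function v := pᵀq satisfies the PDE ∂_{ττ} v + (∂_s v)² + v·∂_{ss} v + (1/12)·∂_{ssss} v − (τ/3)·∂_{ss}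 v = 0, i.e. ∂_{ττ} v = ∂_s( −v·∂_s v − (1/12)·∂_{sss} v + (τ/3)·∂_s v ) at each fixed τ. -/
open BigOperators

namespace PearceyPDE

/-- Partial derivative in the first variable `s`. -/
noncomputable def dS (f : ℝ → ℝ → ℂ) : ℝ → ℝ → ℂ := fun s t => deriv (fun u => f u t) s

/-- Partial derivative in the second variable `τ`. -/
noncomputable def dT (f : ℝ → ℝ → ℂ) : ℝ → ℝ → ℂ := fun s t => deriv (fun u => f s u) t

def CD (f : ℝ → ℝ → ℂ) : Prop := ContDiff ℝ (⊤ : ℕ∞) (fun x : ℝ × ℝ => f x.1 x.2)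

lemma CD.slice1 {f : ℝ → ℝ → ℂ} (hf : CD f) (t : ℝ) : ContDiff ℝ (⊤ : ℕ∞) (fun u => f u t) :=
  hf.comp (contDiff_id.prodMk contDiff_const)
lemma CD.slice2 {f : ℝ → ℝ → ℂ} (hf : CD f) (s : ℝ) : ContDiff ℝ (⊤ : ℕ∞) (fun w => f s w) :=
  hf.comp (contDiff_const.prodMk contDiff_id)
lemma hasDerivAt_slice1 {f : ℝ → ℝ → ℂ} (hf : CD f) (s t : ℝ) :
    HasDerivAt (fun u => f u t) (dS f s t) s :=
  ((hf.slice1 t).differentiable (by simp) s).hasDerivAt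
lemma hasDerivAt_slice2 {f : ℝ → ℝ → ℂ} (hf : CD f) (s t : ℝ) :
    HasDerivAt (fun w => f s w) (dT f s t) t :=
  ((hf.slice2 s).differentiable (by simp) t).hasDerivAt

lemma dS_eq_fderiv {f : ℝ → ℝ → ℂ} (hf : CD f) (s t : ℝ) :
    dS f s t = fderiv ℝ (fun x : ℝ × ℝ => f x.1 x.2) (s, t) (1, 0) := by
  have h1 : HasDerivAt (fun u : ℝ => ((u, t) : ℝ × ℝ)) (1, 0) s :=
    (hasDerivAt_id s).prodMk (hasDerivAt_const s t)
  exact ((hf.differentiable (by simp) (s, t)).hasFDerivAt.comp_hasDerivAt s h1).deriv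

lemma dT_eq_fderiv {f : ℝ → ℝ → ℂ} (hf : CD f) (s t : ℝ) :
    dT f s t = fderiv ℝ (fun x : ℝ × ℝ => f x.1 x.2) (s, t) (0, 1) := by
  have h1 : HasDerivAt (fun w : ℝ => ((s, w) : ℝ × ℝ)) (0, 1) t :=
    (hasDerivAt_const t s).prodMk (hasDerivAt_id t)
  exact ((hf.differentiable (by simp) (s, t)).hasFDerivAt.comp_hasDerivAt t h1).deriv

lemma CD.dS' {f : ℝ → ℝ → ℂ} (hf : CD f) : CD (dS f) := by
  have : (fun x : ℝ × ℝ => dS f x.1 x.2)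
      = fun x : ℝ × ℝ => fderiv ℝ (fun x : ℝ × ℝ => f x.1 x.2) x (1, 0) := by
    funext x; exact dS_eq_fderiv hf x.1 x.2
  rw [CD, this]
  exact (hf.fderiv_right (by simp)).clm_apply contDiff_const

lemma CD.dT' {f : ℝ → ℝ → ℂ} (hf : CD f) : CD (dT f) := by
  have : (fun x : ℝ × ℝ => dT f x.1 x.2)
      = fun x : ℝ × ℝ => fderiv ℝ (fun x : ℝ × ℝ => f x.1 x.2) x (0, 1) := by
    funext x; exact dT_eq_fderiv hf x.1 x.2
  rw [CD, this]
  exact (hf.fderiv_right (by simp)).clm_apply contDiff_const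

/-- Clairaut's theorem for smooth functions of two real variables. -/
lemma dT_dS_comm {f : ℝ → ℝ → ℂ} (hf : CD f) (s t : ℝ) :
    dT (dS f) s t = dS (dT f) s t := by
  set F : ℝ × ℝ → ℂ := fun x => f x.1 x.2 with hF
  have hdf : Differentiable ℝ F := hf.differentiable (by simp)
  have hΦ : ContDiff ℝ (⊤ : ℕ∞) (fun x => fderiv ℝ F x) := hf.fderiv_right (by simp)
  have key : ∀ v w : ℝ × ℝ,
      fderiv ℝ (fun x => fderiv ℝ F x v) (s, t) w = fderiv ℝ (fderiv ℝ F) (s, t) w v := by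
    intro v w
    have : (fun x => fderiv ℝ F x v)
        = (ContinuousLinearMap.apply ℝ ℂ v) ∘ (fun x => fderiv ℝ F x) := rfl
    rw [this, fderiv_comp _ (ContinuousLinearMap.apply ℝ ℂ v).differentiableAt
      (hΦ.differentiable (by simp) (s, t)),
      ContinuousLinearMap.fderiv]
    rfl
  have symm := second_derivative_symmetric (f := F) (f' := fderiv ℝ F)
    (f'' := fderiv ℝ (fderiv ℝ F) (s, t)) (x := (s, t))
    (fun y => (hdf y).hasFDerivAt) ((hΦ.differentiable (by simp) (s, t)).hasFDerivAt)
  have e1 : dT (dS f) s t = fderiv ℝ (fderiv ℝ F) (s, t) (0, 1) (1, 0) := by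
    rw [dT_eq_fderiv hf.dS' s t]
    have : (fun x : ℝ × ℝ => dS f x.1 x.2) = fun x => fderiv ℝ F x (1, 0) := by
      funext x; exact dS_eq_fderiv hf x.1 x.2
    rw [this, key]
  have e2 : dS (dT f) s t = fderiv ℝ (fderiv ℝ F) (s, t) (1, 0) (0, 1) := by
    rw [dS_eq_fderiv hf.dT' s t]
    have : (fun x : ℝ × ℝ => dT f x.1 x.2) = fun x => fderiv ℝ F x (0, 1) := by
      funext x; exact dT_eq_fderiv hf x.1 x.2
    rw [this, key]
  rw [e1, e2, symm]

lemma CD.mul {f g : ℝ → ℝ → ℂ} (hf : CD f) (hg : CD g) :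
    CD (fun s t => f s t * g s t) := ContDiff.mul hf hg
lemma CD.sum {ι : Type*} {f : ι → ℝ → ℝ → ℂ} {u : Finset ι} (hf : ∀ i, CD (f i)) :
    CD (fun s t => ∑ i ∈ u, f i s t) := ContDiff.sum fun i _ => hf i

lemma dS_congr {f g : ℝ → ℝ → ℂ} (h : ∀ s t, f s t = g s t) (s t : ℝ) :
    dS f s t = dS g s t := by
  have : f = g := funext fun s => funext fun t => h s t
  rw [this]
lemma dT_congr {f g : ℝ → ℝ → ℂ} (h : ∀ s t, f s t = g s t) (s t : ℝ) :
    dT f s t = dT g s t := by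
  have : f = g := funext fun s => funext fun t => h s t
  rw [this]

lemma hasDerivAt_affine (c : ℝ) (s : ℝ) :
    HasDerivAt (fun u : ℝ => ((c : ℂ) + (u : ℂ))) 1 s := by
  have h := (Complex.ofRealCLM.hasDerivAt (x := s)).const_add (c : ℂ)
  simpa using h

lemma main_aux (N : ℕ) (c : Fin N → ℝ) (P Q : Fin N → ℝ → ℝ → ℂ)
    (hP : ∀ i, CD (P i)) (hQ : ∀ i, CD (Q i))
    (hsP : ∀ (i : Fin N) (s t : ℝ), dS (dS (dS (P i))) s t =
      (t : ℂ) * dS (P i) s t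
      - 3 * ((∑ j, dS (P j) s t * Q j s t) * P i s t)
      - 3 * ((∑ j, P j s t * Q j s t) * dS (P i) s t)
      - ((c i : ℂ) + (s : ℂ)) * P i s t)
    (hsQ : ∀ (i : Fin N) (s t : ℝ), dS (dS (dS (Q i))) s t =
      (t : ℂ) * dS (Q i) s t
      - 3 * ((∑ j, P j s t * dS (Q j) s t) * Q i s t)
      - 3 * ((∑ j, P j s t * Q j s t) * dS (Q i) s t)
      + ((c i : ℂ) + (s : ℂ)) * Q i s t)
    (htP : ∀ (i : Fin N) (s t : ℝ), dT (P i) s t =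
      -(1 / 2 * dS (dS (P i)) s t) - (∑ j, P j s t * Q j s t) * P i s t)
    (htQ : ∀ (i : Fin N) (s t : ℝ), dT (Q i) s t =
      1 / 2 * dS (dS (Q i)) s t + (∑ j, P j s t * Q j s t) * Q i s t) :
    ∀ s t : ℝ,
      dT (dT (fun s t => ∑ i, P i s t * Q i s t)) s t
        + (dS (fun s t => ∑ i, P i s t * Q i s t) s t) ^ 2
        + (∑ i, P i s t * Q i s t) * dS (dS (fun s t => ∑ i, P i s t * Q i s t)) s t
        + (1 / 12) * dS (dS (dS (dS (fun s t => ∑ i, P i s t * Q i s t)))) s t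
        - ((t : ℂ) / 3) * dS (dS (fun s t => ∑ i, P i s t * Q i s t)) s t = 0 := by
  have hVcd : CD (fun s t => ∑ j, P j s t * Q j s t) := CD.sum fun j => (hP j).mul (hQ j)
  have hAcd : CD (fun s t => ∑ j, dS (P j) s t * Q j s t) :=
    CD.sum fun j => ((hP j).dS').mul (hQ j)
  have hBcd : CD (fun s t => ∑ j, P j s t * dS (Q j) s t) :=
    CD.sum fun j => (hP j).mul ((hQ j).dS')
  -- first s-derivative of V
  have hdV : ∀ s t : ℝ, dS (fun s t => ∑ j, P j s t * Q j s t) s t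
      = ∑ j, (dS (P j) s t * Q j s t + P j s t * dS (Q j) s t) := by
    intro s t
    exact (HasDerivAt.fun_sum fun j _ =>
      (hasDerivAt_slice1 (hP j) s t).mul (hasDerivAt_slice1 (hQ j) s t)).deriv

  -- second s-derivative of V
  have hd2V : ∀ s t : ℝ, dS (dS (fun s t => ∑ j, P j s t * Q j s t)) s t
      = ∑ j, ((dS (dS (P j)) s t * Q j s t + dS (P j) s t * dS (Q j) s t)
            + (dS (P j) s t * dS (Q j) s t + P j s t * dS (dS (Q j)) s t)) := by
    intro s t
    rw [dS_congr hdV s t]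
    exact (HasDerivAt.fun_sum fun j _ =>
      ((hasDerivAt_slice1 ((hP j).dS') s t).mul (hasDerivAt_slice1 (hQ j) s t)).add
        ((hasDerivAt_slice1 (hP j) s t).mul (hasDerivAt_slice1 ((hQ j).dS') s t))).deriv
  -- third s-derivative of V
  have hd3V : ∀ s t : ℝ, dS (dS (dS (fun s t => ∑ j, P j s t * Q j s t))) s t
      = ∑ j, (((dS (dS (dS (P j))) s t * Q j s t + dS (dS (P j)) s t * dS (Q j) s t)
              + (dS (dS (P j)) s t * dS (Q j) s t + dS (P j) s t * dS (dS (Q j)) s t))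
            + ((dS (dS (P j)) s t * dS (Q j) s t + dS (P j) s t * dS (dS (Q j)) s t)
              + (dS (P j) s t * dS (dS (Q j)) s t + P j s t * dS (dS (dS (Q j))) s t))) := by
    intro s t
    rw [dS_congr hd2V s t]
    exact (HasDerivAt.fun_sum fun j _ =>
      (((hasDerivAt_slice1 ((hP j).dS'.dS') s t).mul (hasDerivAt_slice1 (hQ j) s t)).add
        ((hasDerivAt_slice1 ((hP j).dS') s t).mul (hasDerivAt_slice1 ((hQ j).dS') s t))).add
      (((hasDerivAt_slice1 ((hP j).dS') s t).mul (hasDerivAt_slice1 ((hQ j).dS') s t)).add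
        ((hasDerivAt_slice1 (hP j) s t).mul (hasDerivAt_slice1 ((hQ j).dS'.dS') s t)))).deriv
  -- fourth s-derivative of V
  have hd4V : ∀ s t : ℝ, dS (dS (dS (dS (fun s t => ∑ j, P j s t * Q j s t)))) s t
      = ∑ j, ((((dS (dS (dS (dS (P j)))) s t * Q j s t + dS (dS (dS (P j))) s t * dS (Q j) s t)
              + (dS (dS (dS (P j))) s t * dS (Q j) s t + dS (dS (P j)) s t * dS (dS (Q j)) s t))
            + ((dS (dS (dS (P j))) s t * dS (Q j) s t + dS (dS (P j)) s t * dS (dS (Q j)) s t)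
              + (dS (dS (P j)) s t * dS (dS (Q j)) s t + dS (P j) s t * dS (dS (dS (Q j))) s t)))
            + (((dS (dS (dS (P j))) s t * dS (Q j) s t + dS (dS (P j)) s t * dS (dS (Q j)) s t)
              + (dS (dS (P j)) s t * dS (dS (Q j)) s t + dS (P j) s t * dS (dS (dS (Q j))) s t))
            + ((dS (dS (P j)) s t * dS (dS (Q j)) s t + dS (P j) s t * dS (dS (dS (Q j))) s t)
              + (dS (P j) s t * dS (dS (dS (Q j))) s t + P j s t * dS (dS (dS (dS (Q j)))) s t)))) := by
    intro s t
    rw [dS_congr hd3V s t]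
    exact (HasDerivAt.fun_sum fun j _ =>
      ((((hasDerivAt_slice1 ((hP j).dS'.dS'.dS') s t).mul (hasDerivAt_slice1 (hQ j) s t)).add
        ((hasDerivAt_slice1 ((hP j).dS'.dS') s t).mul (hasDerivAt_slice1 ((hQ j).dS') s t))).add
      (((hasDerivAt_slice1 ((hP j).dS'.dS') s t).mul (hasDerivAt_slice1 ((hQ j).dS') s t)).add
        ((hasDerivAt_slice1 ((hP j).dS') s t).mul (hasDerivAt_slice1 ((hQ j).dS'.dS') s t)))).add
      ((((hasDerivAt_slice1 ((hP j).dS'.dS') s t).mul (hasDerivAt_slice1 ((hQ j).dS') s t)).add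
        ((hasDerivAt_slice1 ((hP j).dS') s t).mul (hasDerivAt_slice1 ((hQ j).dS'.dS') s t))).add
      (((hasDerivAt_slice1 ((hP j).dS') s t).mul (hasDerivAt_slice1 ((hQ j).dS'.dS') s t)).add
        ((hasDerivAt_slice1 (hP j) s t).mul (hasDerivAt_slice1 ((hQ j).dS'.dS'.dS') s t))))).deriv
  -- s-derivatives of A and B
  have hdA : ∀ s t : ℝ, dS (fun s t => ∑ j, dS (P j) s t * Q j s t) s t
      = ∑ j, (dS (dS (P j)) s t * Q j s t + dS (P j) s t * dS (Q j) s t) := by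
    intro s t
    exact (HasDerivAt.fun_sum fun j _ =>
      (hasDerivAt_slice1 ((hP j).dS') s t).mul (hasDerivAt_slice1 (hQ j) s t)).deriv
  have hdB : ∀ s t : ℝ, dS (fun s t => ∑ j, P j s t * dS (Q j) s t) s t
      = ∑ j, (dS (P j) s t * dS (Q j) s t + P j s t * dS (dS (Q j)) s t) := by
    intro s t
    exact (HasDerivAt.fun_sum fun j _ =>
      (hasDerivAt_slice1 (hP j) s t).mul (hasDerivAt_slice1 ((hQ j).dS') s t)).deriv
  -- fourth s-derivatives of components, via the third-order system
  have hP4 : ∀ (i : Fin N) (s t : ℝ), dS (dS (dS (dS (P i)))) s t =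
      (t : ℂ) * dS (dS (P i)) s t
      - 3 * (dS (fun s t => ∑ j, dS (P j) s t * Q j s t) s t * P i s t
            + (∑ j, dS (P j) s t * Q j s t) * dS (P i) s t)
      - 3 * (dS (fun s t => ∑ j, P j s t * Q j s t) s t * dS (P i) s t
            + (∑ j, P j s t * Q j s t) * dS (dS (P i)) s t)
      - (1 * P i s t + ((c i : ℂ) + (s : ℂ)) * dS (P i) s t) := by
    intro i s t
    rw [dS_congr (hsP i) s t]
    exact ((((hasDerivAt_slice1 ((hP i).dS') s t).const_mul (t : ℂ)).sub
      (((hasDerivAt_slice1 hAcd s t).mul (hasDerivAt_slice1 (hP i) s t)).const_mul 3)).sub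
      (((hasDerivAt_slice1 hVcd s t).mul (hasDerivAt_slice1 ((hP i).dS') s t)).const_mul 3)).sub
      ((hasDerivAt_affine (c i) s).mul (hasDerivAt_slice1 (hP i) s t)) |>.deriv
  have hQ4 : ∀ (i : Fin N) (s t : ℝ), dS (dS (dS (dS (Q i)))) s t =
      (t : ℂ) * dS (dS (Q i)) s t
      - 3 * (dS (fun s t => ∑ j, P j s t * dS (Q j) s t) s t * Q i s t
            + (∑ j, P j s t * dS (Q j) s t) * dS (Q i) s t)
      - 3 * (dS (fun s t => ∑ j, P j s t * Q j s t) s t * dS (Q i) s t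
            + (∑ j, P j s t * Q j s t) * dS (dS (Q i)) s t)
      + (1 * Q i s t + ((c i : ℂ) + (s : ℂ)) * dS (Q i) s t) := by
    intro i s t
    rw [dS_congr (hsQ i) s t]
    exact ((((hasDerivAt_slice1 ((hQ i).dS') s t).const_mul (t : ℂ)).sub
      (((hasDerivAt_slice1 hBcd s t).mul (hasDerivAt_slice1 (hQ i) s t)).const_mul 3)).sub
      (((hasDerivAt_slice1 hVcd s t).mul (hasDerivAt_slice1 ((hQ i).dS') s t)).const_mul 3)).add
      ((hasDerivAt_affine (c i) s).mul (hasDerivAt_slice1 (hQ i) s t)) |>.deriv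

  -- τ-derivative of V via the heat system
  have hVt : ∀ s t : ℝ, dT (fun s t => ∑ j, P j s t * Q j s t) s t
      = ∑ j, 1 / 2 * (P j s t * dS (dS (Q j)) s t - dS (dS (P j)) s t * Q j s t) := by
    intro s t
    have h1 : dT (fun s t => ∑ j, P j s t * Q j s t) s t
        = ∑ j, (dT (P j) s t * Q j s t + P j s t * dT (Q j) s t) :=
      (HasDerivAt.fun_sum fun j _ =>
        (hasDerivAt_slice2 (hP j) s t).mul (hasDerivAt_slice2 (hQ j) s t)).deriv
    rw [h1]
    refine Finset.sum_congr rfl fun j _ => ?_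
    rw [htP j s t, htQ j s t]; ring
  -- second τ-derivative of V
  have httV : ∀ s t : ℝ, dT (dT (fun s t => ∑ j, P j s t * Q j s t)) s t
      = ∑ j, 1 / 2 * ((dT (P j) s t * dS (dS (Q j)) s t + P j s t * dT (dS (dS (Q j))) s t)
          - (dT (dS (dS (P j))) s t * Q j s t + dS (dS (P j)) s t * dT (Q j) s t)) := by
    intro s t
    rw [dT_congr hVt s t]
    exact (HasDerivAt.fun_sum fun j _ =>
      (((hasDerivAt_slice2 (hP j) s t).mul (hasDerivAt_slice2 ((hQ j).dS'.dS') s t)).sub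
        ((hasDerivAt_slice2 ((hP j).dS'.dS') s t).mul (hasDerivAt_slice2 (hQ j) s t))).const_mul
        (1 / 2)).deriv
  -- Clairaut for second s-derivatives of the components
  have hPcomm : ∀ (j : Fin N) (s t : ℝ),
      dT (dS (dS (P j))) s t = dS (dS (dT (P j))) s t := by
    intro j s t
    rw [dT_dS_comm (hP j).dS' s t]
    exact dS_congr (fun s t => dT_dS_comm (hP j) s t) s t
  have hQcomm : ∀ (j : Fin N) (s t : ℝ),
      dT (dS (dS (Q j))) s t = dS (dS (dT (Q j))) s t := by
    intro j s t
    rw [dT_dS_comm (hQ j).dS' s t]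
    exact dS_congr (fun s t => dT_dS_comm (hQ j) s t) s t
  -- s-derivatives of the τ-derivatives of the components
  have hPt2 : ∀ (j : Fin N) (s t : ℝ), dS (dT (P j)) s t =
      -(1 / 2 * dS (dS (dS (P j))) s t)
      - (dS (fun s t => ∑ j, P j s t * Q j s t) s t * P j s t
         + (∑ j, P j s t * Q j s t) * dS (P j) s t) := by
    intro j s t
    rw [dS_congr (htP j) s t]
    exact (((hasDerivAt_slice1 ((hP j).dS'.dS') s t).const_mul (1 / 2)).neg.sub
      ((hasDerivAt_slice1 hVcd s t).mul (hasDerivAt_slice1 (hP j) s t))).deriv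
  have hQt2 : ∀ (j : Fin N) (s t : ℝ), dS (dT (Q j)) s t =
      1 / 2 * dS (dS (dS (Q j))) s t
      + (dS (fun s t => ∑ j, P j s t * Q j s t) s t * Q j s t
         + (∑ j, P j s t * Q j s t) * dS (Q j) s t) := by
    intro j s t
    rw [dS_congr (htQ j) s t]
    exact (((hasDerivAt_slice1 ((hQ j).dS'.dS') s t).const_mul (1 / 2)).add
      ((hasDerivAt_slice1 hVcd s t).mul (hasDerivAt_slice1 (hQ j) s t))).deriv
  have hPt3 : ∀ (j : Fin N) (s t : ℝ), dS (dS (dT (P j))) s t =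
      -(1 / 2 * dS (dS (dS (dS (P j)))) s t)
      - ((dS (dS (fun s t => ∑ j, P j s t * Q j s t)) s t * P j s t
          + dS (fun s t => ∑ j, P j s t * Q j s t) s t * dS (P j) s t)
        + (dS (fun s t => ∑ j, P j s t * Q j s t) s t * dS (P j) s t
          + (∑ j, P j s t * Q j s t) * dS (dS (P j)) s t)) := by
    intro j s t
    rw [dS_congr (hPt2 j) s t]
    exact (((hasDerivAt_slice1 ((hP j).dS'.dS'.dS') s t).const_mul (1 / 2)).neg.sub
      (((hasDerivAt_slice1 hVcd.dS' s t).mul (hasDerivAt_slice1 (hP j) s t)).add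
       ((hasDerivAt_slice1 hVcd s t).mul (hasDerivAt_slice1 ((hP j).dS') s t)))).deriv
  have hQt3 : ∀ (j : Fin N) (s t : ℝ), dS (dS (dT (Q j))) s t =
      1 / 2 * dS (dS (dS (dS (Q j)))) s t
      + ((dS (dS (fun s t => ∑ j, P j s t * Q j s t)) s t * Q j s t
          + dS (fun s t => ∑ j, P j s t * Q j s t) s t * dS (Q j) s t)
        + (dS (fun s t => ∑ j, P j s t * Q j s t) s t * dS (Q j) s t
          + (∑ j, P j s t * Q j s t) * dS (dS (Q j)) s t)) := by
    intro j s t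
    rw [dS_congr (hQt2 j) s t]
    exact (((hasDerivAt_slice1 ((hQ j).dS'.dS'.dS') s t).const_mul (1 / 2)).add
      (((hasDerivAt_slice1 hVcd.dS' s t).mul (hasDerivAt_slice1 (hQ j) s t)).add
       ((hasDerivAt_slice1 hVcd s t).mul (hasDerivAt_slice1 ((hQ j).dS') s t)))).deriv

  -- dT(dT V) purely in terms of s-derivatives
  have httV2 : ∀ s t : ℝ, dT (dT (fun s t => ∑ j, P j s t * Q j s t)) s t
      = ∑ j, (1 / 4 * (P j s t * dS (dS (dS (dS (Q j)))) s t)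
            + 1 / 4 * (dS (dS (dS (dS (P j)))) s t * Q j s t)
            - 1 / 2 * (dS (dS (P j)) s t * dS (dS (Q j)) s t)
            + dS (dS (fun s t => ∑ j, P j s t * Q j s t)) s t * (P j s t * Q j s t)
            + dS (fun s t => ∑ j, P j s t * Q j s t) s t * (P j s t * dS (Q j) s t)
            + dS (fun s t => ∑ j, P j s t * Q j s t) s t * (dS (P j) s t * Q j s t)) := by
    intro s t
    rw [httV s t]
    refine Finset.sum_congr rfl fun j _ => ?_
    rw [hQcomm j s t, hQt3 j s t, hPcomm j s t, hPt3 j s t, htP j s t, htQ j s t]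
    ring
  intro s t
  -- reduction of the cubic sums
  have e40 : ∑ j, dS (dS (dS (dS (P j)))) s t * Q j s t
      = (t : ℂ) * ∑ j, dS (dS (P j)) s t * Q j s t
        - 3 * (((∑ j, dS (dS (P j)) s t * Q j s t) + ∑ j, dS (P j) s t * dS (Q j) s t)
                * ∑ j, P j s t * Q j s t
              + (∑ j, dS (P j) s t * Q j s t) * ∑ j, dS (P j) s t * Q j s t)
        - 3 * (((∑ j, dS (P j) s t * Q j s t) + ∑ j, P j s t * dS (Q j) s t)
                * ∑ j, dS (P j) s t * Q j s t
              + (∑ j, P j s t * Q j s t) * ∑ j, dS (dS (P j)) s t * Q j s t)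
        - ((∑ j, P j s t * Q j s t)
              + ∑ j, ((c j : ℂ) + (s : ℂ)) * (dS (P j) s t * Q j s t)) := by
    have step : ∑ j, dS (dS (dS (dS (P j)))) s t * Q j s t
        = ∑ j, ((t : ℂ) * (dS (dS (P j)) s t * Q j s t)
            - 3 * (dS (fun s t => ∑ j, dS (P j) s t * Q j s t) s t * (P j s t * Q j s t))
            - 3 * ((∑ j, dS (P j) s t * Q j s t) * (dS (P j) s t * Q j s t))
            - 3 * (dS (fun s t => ∑ j, P j s t * Q j s t) s t * (dS (P j) s t * Q j s t))
            - 3 * ((∑ j, P j s t * Q j s t) * (dS (dS (P j)) s t * Q j s t))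
            - P j s t * Q j s t
            - ((c j : ℂ) + (s : ℂ)) * (dS (P j) s t * Q j s t)) :=
      Finset.sum_congr rfl fun j _ => by rw [hP4 j s t]; ring
    rw [step, hdA s t, hdV s t]
    simp only [Finset.sum_add_distrib, Finset.sum_sub_distrib, ← Finset.mul_sum]
    ring
  have e04 : ∑ j, P j s t * dS (dS (dS (dS (Q j)))) s t
      = (t : ℂ) * ∑ j, P j s t * dS (dS (Q j)) s t
        - 3 * (((∑ j, dS (P j) s t * dS (Q j) s t) + ∑ j, P j s t * dS (dS (Q j)) s t)
                * ∑ j, P j s t * Q j s t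
              + (∑ j, P j s t * dS (Q j) s t) * ∑ j, P j s t * dS (Q j) s t)
        - 3 * (((∑ j, dS (P j) s t * Q j s t) + ∑ j, P j s t * dS (Q j) s t)
                * ∑ j, P j s t * dS (Q j) s t
              + (∑ j, P j s t * Q j s t) * ∑ j, P j s t * dS (dS (Q j)) s t)
        + ((∑ j, P j s t * Q j s t)
              + ∑ j, ((c j : ℂ) + (s : ℂ)) * (P j s t * dS (Q j) s t)) := by
    have step : ∑ j, P j s t * dS (dS (dS (dS (Q j)))) s t
        = ∑ j, ((t : ℂ) * (P j s t * dS (dS (Q j)) s t)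
            - 3 * (dS (fun s t => ∑ j, P j s t * dS (Q j) s t) s t * (P j s t * Q j s t))
            - 3 * ((∑ j, P j s t * dS (Q j) s t) * (P j s t * dS (Q j) s t))
            - 3 * (dS (fun s t => ∑ j, P j s t * Q j s t) s t * (P j s t * dS (Q j) s t))
            - 3 * ((∑ j, P j s t * Q j s t) * (P j s t * dS (dS (Q j)) s t))
            + P j s t * Q j s t
            + ((c j : ℂ) + (s : ℂ)) * (P j s t * dS (Q j) s t)) :=
      Finset.sum_congr rfl fun j _ => by rw [hQ4 j s t]; ring
    rw [step, hdB s t, hdV s t]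
    simp only [Finset.sum_add_distrib, Finset.sum_sub_distrib, ← Finset.mul_sum]
    ring
  have e31 : ∑ j, dS (dS (dS (P j))) s t * dS (Q j) s t
      = (t : ℂ) * ∑ j, dS (P j) s t * dS (Q j) s t
        - 3 * ((∑ j, dS (P j) s t * Q j s t) * ∑ j, P j s t * dS (Q j) s t)
        - 3 * ((∑ j, P j s t * Q j s t) * ∑ j, dS (P j) s t * dS (Q j) s t)
        - ∑ j, ((c j : ℂ) + (s : ℂ)) * (P j s t * dS (Q j) s t) := by
    have step : ∑ j, dS (dS (dS (P j))) s t * dS (Q j) s t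
        = ∑ j, ((t : ℂ) * (dS (P j) s t * dS (Q j) s t)
            - 3 * ((∑ j, dS (P j) s t * Q j s t) * (P j s t * dS (Q j) s t))
            - 3 * ((∑ j, P j s t * Q j s t) * (dS (P j) s t * dS (Q j) s t))
            - ((c j : ℂ) + (s : ℂ)) * (P j s t * dS (Q j) s t)) :=
      Finset.sum_congr rfl fun j _ => by rw [hsP j s t]; ring
    rw [step]
    simp only [Finset.sum_add_distrib, Finset.sum_sub_distrib, ← Finset.mul_sum]
  have e13 : ∑ j, dS (P j) s t * dS (dS (dS (Q j))) s t
      = (t : ℂ) * ∑ j, dS (P j) s t * dS (Q j) s t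
        - 3 * ((∑ j, P j s t * dS (Q j) s t) * ∑ j, dS (P j) s t * Q j s t)
        - 3 * ((∑ j, P j s t * Q j s t) * ∑ j, dS (P j) s t * dS (Q j) s t)
        + ∑ j, ((c j : ℂ) + (s : ℂ)) * (dS (P j) s t * Q j s t) := by
    have step : ∑ j, dS (P j) s t * dS (dS (dS (Q j))) s t
        = ∑ j, ((t : ℂ) * (dS (P j) s t * dS (Q j) s t)
            - 3 * ((∑ j, P j s t * dS (Q j) s t) * (dS (P j) s t * Q j s t))
            - 3 * ((∑ j, P j s t * Q j s t) * (dS (P j) s t * dS (Q j) s t))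
            + ((c j : ℂ) + (s : ℂ)) * (dS (P j) s t * Q j s t)) :=
      Finset.sum_congr rfl fun j _ => by rw [hsQ j s t]; ring
    rw [step]
    simp only [Finset.sum_add_distrib, Finset.sum_sub_distrib, ← Finset.mul_sum]
  -- final assembly
  rw [httV2 s t, hd4V s t, hd2V s t, hdV s t]
  simp only [Finset.sum_add_distrib, Finset.sum_sub_distrib, ← Finset.mul_sum]
  rw [e40, e04, e31, e13]
  ring




/-- if `p, q : ℝ² → ℂ^N` are `C^∞` and satisfy, for every fixed `τ`, the
coupled third-order system
`∂ₛₛₛp + 3(∂ₛpᵀq)p + 3(pᵀq)∂ₛp − τ∂ₛp + D(s)p = 0`,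
`∂ₛₛₛq + 3(pᵀ∂ₛq)q + 3(pᵀq)∂ₛq − τ∂ₛq − D(s)q = 0` (with `D(s) = diag(a₁+s, …, a_N+s)`),
as well as the coupled nonlinear heat system
`−(1/2)∂ₛₛp − ∂_τp = (pᵀq)p`, `−(1/2)∂ₛₛq + ∂_τq = (pᵀq)q`, then `v := pᵀq` satisfies
`∂_ττ v + (∂ₛv)² + v ∂ₛₛv + (1/12)∂ₛₛₛₛv − (τ/3)∂ₛₛv = 0`. -/
theorem v_satisfies_reduced_KP (N : ℕ) (hN : 1 ≤ N) (a : Fin N → ℝ)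
    (p q : ℝ → ℝ → Fin N → ℂ)
    (hp : ContDiff ℝ (⊤ : ℕ∞) (fun x : ℝ × ℝ => p x.1 x.2))
    (hq : ContDiff ℝ (⊤ : ℕ∞) (fun x : ℝ × ℝ => q x.1 x.2))
    (hsysp : ∀ (i : Fin N) (s t : ℝ),
      dS (dS (dS (fun u w => p u w i))) s t
        + 3 * (∑ j, dS (fun u w => p u w j) s t * q s t j) * p s t i
        + 3 * (∑ j, p s t j * q s t j) * dS (fun u w => p u w i) s t
        - (t : ℂ) * dS (fun u w => p u w i) s t
        + ((a i : ℂ) + (s : ℂ)) * p s t i = 0)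
    (hsysq : ∀ (i : Fin N) (s t : ℝ),
      dS (dS (dS (fun u w => q u w i))) s t
        + 3 * (∑ j, p s t j * dS (fun u w => q u w j) s t) * q s t i
        + 3 * (∑ j, p s t j * q s t j) * dS (fun u w => q u w i) s t
        - (t : ℂ) * dS (fun u w => q u w i) s t
        - ((a i : ℂ) + (s : ℂ)) * q s t i = 0)
    (hheatp : ∀ (i : Fin N) (s t : ℝ),
      -(1 / 2) * dS (dS (fun u w => p u w i)) s t - dT (fun u w => p u w i) s t
        = (∑ j, p s t j * q s t j) * p s t i)
    (hheatq : ∀ (i : Fin N) (s t : ℝ),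
      -(1 / 2) * dS (dS (fun u w => q u w i)) s t + dT (fun u w => q u w i) s t
        = (∑ j, p s t j * q s t j) * q s t i)
    (v : ℝ → ℝ → ℂ) (hv : ∀ s t : ℝ, v s t = ∑ i, p s t i * q s t i) :
    ∀ s t : ℝ,
      dT (dT v) s t + (dS v s t) ^ 2 + v s t * dS (dS v) s t
        + (1 / 12) * dS (dS (dS (dS v))) s t - ((t : ℂ) / 3) * dS (dS v) s t = 0 := by
  have hv' : v = fun s t => ∑ i, p s t i * q s t i :=
    funext fun s => funext fun t => hv s t
  subst hv'
  refine main_aux N a (fun i u w => p u w i) (fun i u w => q u w i)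
    (fun i => contDiff_pi.mp hp i) (fun i => contDiff_pi.mp hq i) ?_ ?_ ?_ ?_
  · intro i s t; linear_combination hsysp i s t
  · intro i s t; linear_combination hsysq i s t
  · intro i s t; linear_combination -hheatp i s t
  · intro i s t; linear_combination hheatq i s t

end PearceyPDE
end
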